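/- Let f : ℝ → ℝ be a nonnegative integrable function and h > 0. Then for any t ∈ (0,1] and y ∈ ℝ^d, ∫_0^1 (2h log(1/t))^{3/2} · 1{‖y‖₂ < √(8h log(1/t))} dt ≤ C h^{3/2} exp(-‖y‖₂²/(16h)) for the absolute constant C = (3/2)^{5/2} e^{1/e} 2³. -/

import Mathlib

/-!
Write `L = log (1/t)`. Where the indicator is nonzero, `‖y‖² < 8 h L`, so
`exp (-‖y‖² / (16 h)) ≥ exp (-L / 2) = √t`; with `L^{3/2} ≤ (L + L²) / 2` (AM–GM) the integrand
is at most `(2h)^{3/2} exp (-‖y‖² / (16 h)) (L + L²) / (2 √t)`. The last factor has the elementary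
antiderivative `√t (10 - 5 log t + log² t)`, so its integral over `(0, 1]` is `10`, and
`2^{3/2} · 10 ≤ (3/2)^{5/2} e^{1/e} 2³` is a numerical check.
-/

open MeasureTheory Set Filter Topology Real

lemma rpow_three_halves_le_half_add_sq {x : ℝ} (hx : 0 ≤ x) :
    x ^ (3 / 2 : ℝ) ≤ (x + x ^ 2) / 2 := by
  have hsq : √x ^ 2 = x := sq_sqrt hx
  have hpow : x ^ (3 / 2 : ℝ) = √x ^ 3 := by
    rw [sqrt_eq_rpow, ← rpow_natCast, ← rpow_mul hx]
    norm_num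
  rw [hpow]
  -- `(x + x²)/2 - x √x = x (1 - √x)² / 2`
  nlinarith [mul_nonneg (sq_nonneg (√x)) (sq_nonneg (1 - √x))]

lemma hasDerivAt_sqrt_mul_log_quadratic {t : ℝ} (ht : 0 < t) :
    HasDerivAt (fun t => √t * (10 - 5 * log t + log t ^ 2))
      ((log t ^ 2 - log t) / (2 * √t)) t := by
  have hlog := hasDerivAt_log ht.ne'
  have hF := (hasDerivAt_sqrt ht.ne').mul
    (((hasDerivAt_const t (10 : ℝ)).sub (hlog.const_mul 5)).add (hlog.pow 2))
  refine hF.congr_deriv ?_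
  have hsq : √t ^ 2 = t := sq_sqrt ht.le
  have hne : √t ≠ 0 := (sqrt_pos.2 ht).ne'
  simp only [Pi.add_apply, Pi.sub_apply, Pi.pow_apply]
  field_simp
  linear_combination (4 * log t - 10) * hsq

lemma tendsto_sqrt_mul_log_quadratic_nhdsGT_zero :
    Tendsto (fun t => √t * (10 - 5 * log t + log t ^ 2)) (𝓝[>] 0) (𝓝 0) := by
  have hsqrt : Tendsto (fun t : ℝ => √t) (𝓝[>] 0) (𝓝 0) := by
    simpa using (continuous_sqrt.tendsto 0).mono_left nhdsWithin_le_nhds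
  have hhalf := tendsto_log_mul_rpow_nhdsGT_zero (r := 1 / 2) (by norm_num)
  have hquarter := tendsto_log_mul_rpow_nhdsGT_zero (r := 1 / 4) (by norm_num)
  have hlim := ((hsqrt.const_mul 10).sub (hhalf.const_mul 5)).add (hquarter.mul hquarter)
  simp only [mul_zero, sub_zero, add_zero] at hlim
  refine hlim.congr' ?_
  filter_upwards [self_mem_nhdsWithin] with t (ht : 0 < t)
  have hquarter_sq : t ^ (1 / 4 : ℝ) * t ^ (1 / 4 : ℝ) = √t := by
    rw [← rpow_add ht, sqrt_eq_rpow]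
    norm_num
  rw [← sqrt_eq_rpow]
  linear_combination log t ^ 2 * hquarter_sq

lemma continuousOn_sqrt_mul_log_quadratic :
    ContinuousOn (fun t => √t * (10 - 5 * log t + log t ^ 2)) (Icc 0 1) := by
  intro t ht
  rcases ht.1.eq_or_lt with rfl | ht0
  · refine ContinuousWithinAt.mono ?_ Icc_subset_Ici_self
    rw [← continuousWithinAt_Ioi_iff_Ici, ContinuousWithinAt]
    simpa using tendsto_sqrt_mul_log_quadratic_nhdsGT_zero
  · exact (hasDerivAt_sqrt_mul_log_quadratic ht0).continuousAt.continuousWithinAt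

lemma log_sq_sub_log_div_sqrt_nonneg {t : ℝ} (ht₀ : 0 ≤ t) (ht₁ : t ≤ 1) :
    0 ≤ (log t ^ 2 - log t) / (2 * √t) :=
  div_nonneg (by nlinarith [log_nonpos ht₀ ht₁]) (by positivity)

lemma integrableOn_log_sq_sub_log_div_sqrt :
    IntegrableOn (fun t => (log t ^ 2 - log t) / (2 * √t)) (Ioc 0 1) :=
  intervalIntegral.integrableOn_deriv_of_nonneg continuousOn_sqrt_mul_log_quadratic
    (fun _ ht => hasDerivAt_sqrt_mul_log_quadratic ht.1)
    (fun _ ht => log_sq_sub_log_div_sqrt_nonneg ht.1.le ht.2.le)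

lemma integral_log_sq_sub_log_div_sqrt :
    ∫ t in Ioc (0 : ℝ) 1, (log t ^ 2 - log t) / (2 * √t) = 10 := by
  rw [← intervalIntegral.integral_of_le zero_le_one,
    intervalIntegral.integral_eq_sub_of_hasDeriv_right_of_le zero_le_one
      continuousOn_sqrt_mul_log_quadratic
      (fun _ ht => (hasDerivAt_sqrt_mul_log_quadratic ht.1).hasDerivWithinAt)
      ((intervalIntegrable_iff_integrableOn_Ioc_of_le zero_le_one).2
        integrableOn_log_sq_sub_log_div_sqrt)]
  simp

lemma sqrt_le_exp_neg_sq_div_of_lt_sqrt {h r t : ℝ} (hh : 0 < h) (hr : 0 ≤ r) (ht : 0 < t)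
    (hlt : r < √(8 * h * log (1 / t))) : √t ≤ exp (-r ^ 2 / (16 * h)) := by
  have hsq : r ^ 2 < 8 * h * log (1 / t) := (lt_sqrt hr).1 hlt
  rw [one_div, log_inv] at hsq
  rw [sqrt_eq_rpow, rpow_def_of_pos ht, exp_le_exp, le_div_iff₀ (by positivity)]
  nlinarith

lemma rpow_three_halves_mul_ite_le {h r t : ℝ} (hh : 0 < h) (hr : 0 ≤ r)
    (ht : t ∈ Ioc (0 : ℝ) 1) :
    (2 * h * log (1 / t)) ^ (3 / 2 : ℝ) * (if r < √(8 * h * log (1 / t)) then 1 else 0)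
      ≤ (2 * h) ^ (3 / 2 : ℝ) * exp (-r ^ 2 / (16 * h))
          * ((log t ^ 2 - log t) / (2 * √t)) := by
  have hlog : log (1 / t) = -log t := by rw [one_div, log_inv]
  have hL : 0 ≤ log (1 / t) := log_nonneg (one_le_one_div ht.1 ht.2)
  split_ifs with hlt
  · have hsqrt := sqrt_le_exp_neg_sq_div_of_lt_sqrt hh hr ht.1 hlt
    have hsqrt_pos : 0 < √t := sqrt_pos.2 ht.1
    rw [mul_one, mul_rpow (by positivity) hL, mul_assoc ((2 * h) ^ (3 / 2 : ℝ))]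
    refine mul_le_mul_of_nonneg_left ?_ (by positivity)
    calc log (1 / t) ^ (3 / 2 : ℝ)
        ≤ (log (1 / t) + log (1 / t) ^ 2) / 2 := rpow_three_halves_le_half_add_sq hL
      _ ≤ (log (1 / t) + log (1 / t) ^ 2) / 2 * (exp (-r ^ 2 / (16 * h)) / √t) :=
          le_mul_of_one_le_right (by positivity) ((one_le_div hsqrt_pos).2 hsqrt)
      _ = exp (-r ^ 2 / (16 * h)) * ((log t ^ 2 - log t) / (2 * √t)) := by
          rw [hlog]
          field_simp
          ring
  · rw [mul_zero]
    have := log_sq_sub_log_div_sqrt_nonneg ht.1.le ht.2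
    positivity

lemma two_mul_rpow_three_halves_mul_ten_le {h : ℝ} (hh : 0 ≤ h) :
    (2 * h) ^ (3 / 2 : ℝ) * 10
      ≤ (3 / 2 : ℝ) ^ (5 / 2 : ℝ) * exp (1 / exp 1) * 2 ^ 3 * h ^ (3 / 2 : ℝ) := by
  have hsqrt2 : √2 ≤ 1.415 := sqrt_le_iff.2 ⟨by norm_num, by norm_num⟩
  have hsqrt32 : 1.2 ≤ √(3 / 2) := le_sqrt_of_sq_le (by norm_num)
  have htwo : (2 : ℝ) ^ (3 / 2 : ℝ) = 2 * √2 := by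
    rw [sqrt_eq_rpow, ← rpow_one_add' (by norm_num) (by norm_num)]
    norm_num
  have hthree : (3 / 2 : ℝ) ^ (5 / 2 : ℝ) = (3 / 2) ^ 2 * √(3 / 2) := by
    rw [sqrt_eq_rpow, ← rpow_natCast, ← rpow_add (by norm_num)]
    norm_num
  have hexp : 4 / 3 ≤ exp (1 / exp 1) := by
    have : 1 / 3 ≤ 1 / exp 1 :=
      one_div_le_one_div_of_le (exp_pos 1) (exp_one_lt_d9.le.trans (by norm_num))
    linarith [add_one_le_exp (1 / exp 1)]
  rw [mul_rpow (by norm_num) hh, htwo, hthree]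
  have : 0 ≤ h ^ (3 / 2 : ℝ) := by positivity
  have : 0 ≤ √(3 / 2) := sqrt_nonneg _
  nlinarith [mul_le_mul hsqrt32 hexp (by norm_num) (by positivity)]

theorem stmt_10 {d : ℕ} (h : ℝ) (hh : 0 < h) (y : EuclideanSpace ℝ (Fin d)) :
    ∫ t in Set.Ioc (0:ℝ) 1,
        (2 * h * Real.log (1 / t)) ^ ((3:ℝ)/2)
          * (if ‖y‖ < Real.sqrt (8 * h * Real.log (1 / t)) then (1:ℝ) else 0)
      ≤ ((3/2 : ℝ) ^ ((5:ℝ)/2) * Real.exp (1 / Real.exp 1) * 2 ^ 3)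
          * h ^ ((3:ℝ)/2) * Real.exp (-‖y‖ ^ 2 / (16 * h)) := by
  set c := (2 * h) ^ (3 / 2 : ℝ) * exp (-‖y‖ ^ 2 / (16 * h))
  calc _ ≤ ∫ t in Ioc (0 : ℝ) 1, c * ((log t ^ 2 - log t) / (2 * √t)) := by
        refine integral_mono_of_nonneg ?_ (integrableOn_log_sq_sub_log_div_sqrt.const_mul c) ?_
        all_goals
          refine (ae_restrict_iff' measurableSet_Ioc).2 (ae_of_all _ fun t ht => ?_)
        · have : 0 ≤ log (1 / t) := log_nonneg (one_le_one_div ht.1 ht.2)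
          positivity
        · exact rpow_three_halves_mul_ite_le hh (norm_nonneg y) ht
    _ = (2 * h) ^ (3 / 2 : ℝ) * 10 * exp (-‖y‖ ^ 2 / (16 * h)) := by
        rw [integral_const_mul, integral_log_sq_sub_log_div_sqrt]
        ring
    _ ≤ _ :=
        mul_le_mul_of_nonneg_right (two_mul_rpow_three_halves_mul_ten_le hh.le) (exp_pos _).le
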